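/- arXiv:2404.08843 — 3 statements merged into one kernel-verified Lean document; each statement's English description precedes it below -/
import Mathlib

section
/- Let V and W be varieties of the same type without nullary operations, with W term idempotent. Suppose there exist terms f(x,y,z) and g(x,y,z) such that (a) V ⊨ f(x,y,y) = x and V ⊨ g(x,x,y) = y, (b) W ⊨ f(x,x,y) = g(x,x,y), and (c) f(x,x,y) is a term idempotent of W. Then the Mal'tsev product V ∘ W is a variety (i.e., closed under homomorphic images). -/
structure Alg (Ω : Type) (ar : Ω → ℕ) : Type 1 where
  carrier : Type
  interp : ∀ ω : Ω, (Fin (ar ω) → carrier) → carrier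

inductive Term (Ω : Type) (ar : Ω → ℕ) (X : Type) : Type
  | var : X → Term Ω ar X
  | op : (ω : Ω) → (Fin (ar ω) → Term Ω ar X) → Term Ω ar X

variable {Ω : Type} {ar : Ω → ℕ} {X Y : Type}

def Term.eval (A : Alg Ω ar) (v : X → A.carrier) : Term Ω ar X → A.carrier
  | .var x => v x
  | .op ω ts => A.interp ω fun i => (ts i).eval A v

def Term.subst (σ : X → Term Ω ar Y) : Term Ω ar X → Term Ω ar Y
  | .var x => σ x
  | .op ω ts => .op ω fun i => (ts i).subst σ

def Term.varSet : Term Ω ar X → Set X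
  | .var x => {x}
  | .op _ ts => ⋃ i, (ts i).varSet

def Satisfies (A : Alg Ω ar) (p q : Term Ω ar X) : Prop :=
  ∀ v : X → A.carrier, p.eval A v = q.eval A v

/-- `V ⊨ p = q` for a class of algebras `V`. -/
def VSat (V : Alg Ω ar → Prop) (p q : Term Ω ar X) : Prop :=
  ∀ A, V A → Satisfies A p q

/-- `p` is a term idempotent of `V`: `V ⊨ ω(p,…,p) = p` for every basic operation `ω`. -/
def TermIdem (V : Alg Ω ar → Prop) (p : Term Ω ar X) : Prop :=
  ∀ ω : Ω, VSat V (Term.op ω fun _ => p) p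

/-- `V` is a term idempotent variety: both sides of every nontrivial identity it
satisfies are term idempotents of `V`. -/
def TermIdemVariety (V : Alg Ω ar → Prop) : Prop :=
  ∀ p q : Term Ω ar ℕ, VSat V p q → p ≠ q → TermIdem V p ∧ TermIdem V q

def Models (A : Alg Ω ar) (E : Set (Term Ω ar ℕ × Term Ω ar ℕ)) : Prop :=
  ∀ e ∈ E, Satisfies A e.1 e.2

/-- The variety (equational class) defined by the set of identities `E`. -/
def VarietyOf (E : Set (Term Ω ar ℕ × Term Ω ar ℕ)) : Alg Ω ar → Prop :=
  fun A => Models A E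

structure IsCongr (A : Alg Ω ar) (r : A.carrier → A.carrier → Prop) : Prop where
  refl : ∀ a, r a a
  symm : ∀ {a b}, r a b → r b a
  trans : ∀ {a b c}, r a b → r b c → r a c
  compat : ∀ (ω : Ω) (f g : Fin (ar ω) → A.carrier),
    (∀ i, r (f i) (g i)) → r (A.interp ω f) (A.interp ω g)

/-- Quotient algebra of `A` by a (congruence) relation `r`. -/
noncomputable def Alg.quot (A : Alg Ω ar) (r : A.carrier → A.carrier → Prop) : Alg Ω ar where
  carrier := Quot r
  interp := fun ω f => Quot.mk r (A.interp ω fun i => (f i).out)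

/-- `r` is the `W`-replica congruence of `A`: the smallest congruence whose quotient lies in `W`. -/
def IsReplica (W : Alg Ω ar → Prop) (A : Alg Ω ar) (r : A.carrier → A.carrier → Prop) : Prop :=
  IsCongr A r ∧ W (A.quot r) ∧
    ∀ s : A.carrier → A.carrier → Prop, IsCongr A s → W (A.quot s) →
      ∀ a b, r a b → s a b

/-- The `r`-class of `a` is a subalgebra of `A`. -/
def ClassIsSub (A : Alg Ω ar) (r : A.carrier → A.carrier → Prop) (a : A.carrier) : Prop :=
  ∀ (ω : Ω) (f : Fin (ar ω) → A.carrier), (∀ i, r (f i) a) → r (A.interp ω f) a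

/-- The `r`-class of `a` viewed as an algebra. -/
def classAlg (A : Alg Ω ar) (r : A.carrier → A.carrier → Prop) (a : A.carrier)
    (h : ClassIsSub A r a) : Alg Ω ar where
  carrier := {b : A.carrier // r b a}
  interp := fun ω f => ⟨A.interp ω fun i => (f i).1, h ω _ fun i => (f i).2⟩

/-- The Mal'tsev product `V ∘ W`. -/
def MalProd (V W : Alg Ω ar → Prop) (A : Alg Ω ar) : Prop :=
  ∀ r : A.carrier → A.carrier → Prop, IsReplica W A r →
    ∀ (a : A.carrier) (h : ClassIsSub A r a), V (classAlg A r a h)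

structure Hom (A B : Alg Ω ar) where
  toFun : A.carrier → B.carrier
  map : ∀ ω f, toFun (A.interp ω f) = B.interp ω fun i => toFun (f i)

def IsIdem (A : Alg Ω ar) (a : A.carrier) : Prop :=
  ∀ ω : Ω, A.interp ω (fun _ => a) = a

/-- Substitution sending variables `0, 1, 2` to `a, b, c` respectively. -/
def sub3 {Ω : Type} {ar : Ω → ℕ} (a b c : Term Ω ar ℕ) : ℕ → Term Ω ar ℕ
  | 0 => a
  | 1 => b
  | 2 => c
  | n + 3 => .var (n + 3)

/-! ### Auxiliary infrastructure -/

open Relation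

theorem eval_congr_vars {A : Alg Ω ar} (p : Term Ω ar ℕ) {v w : ℕ → A.carrier}
    (h : ∀ x ∈ p.varSet, v x = w x) : p.eval A v = p.eval A w := by
  induction p with
  | var x => exact h x (by simp [Term.varSet])
  | op ω ts ih =>
      simp only [Term.eval]
      congr 1; funext i
      exact ih i fun x hx => h x (Set.mem_iUnion.mpr ⟨i, hx⟩)

theorem subst_eval {A : Alg Ω ar} (σ : ℕ → Term Ω ar ℕ) (p : Term Ω ar ℕ) (v : ℕ → A.carrier) :
    (p.subst σ).eval A v = p.eval A (fun n => (σ n).eval A v) := by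
  induction p with
  | var x => rfl
  | op ω ts ih =>
      simp only [Term.subst, Term.eval]
      congr 1; funext i; exact ih i

theorem hom_eval {A B : Alg Ω ar} (h : Hom A B) (p : Term Ω ar ℕ) (v : ℕ → A.carrier) :
    h.toFun (p.eval A v) = p.eval B (fun n => h.toFun (v n)) := by
  induction p with
  | var x => rfl
  | op ω ts ih =>
      simp only [Term.eval]
      rw [h.map]
      congr 1; funext i; exact ih i

theorem eval_rel {A : Alg Ω ar} {r : A.carrier → A.carrier → Prop} (hr : IsCongr A r)
    (p : Term Ω ar ℕ) {v w : ℕ → A.carrier}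
    (h : ∀ n, r (v n) (w n)) : r (p.eval A v) (p.eval A w) := by
  induction p with
  | var x => exact h x
  | op ω ts ih => exact hr.compat ω _ _ ih

theorem rel_of_quot_eq {A : Alg Ω ar} {r : A.carrier → A.carrier → Prop} (hr : IsCongr A r)
    {a b : A.carrier} (h : Quot.mk r a = Quot.mk r b) : r a b := by
  have key : Quot.lift (r a)
      (fun x y hxy => propext ⟨fun h' => hr.trans h' hxy, fun h' => hr.trans h' (hr.symm hxy)⟩)
      (Quot.mk r b) := by
    rw [← h]; exact hr.refl a
  exact key

theorem out_rel {A : Alg Ω ar} {r : A.carrier → A.carrier → Prop} (hr : IsCongr A r)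
    (a : A.carrier) : r ((Quot.mk r a).out) a :=
  rel_of_quot_eq hr (Quot.out_eq _)

theorem quot_eval {A : Alg Ω ar} {r : A.carrier → A.carrier → Prop} (hr : IsCongr A r)
    (p : Term Ω ar ℕ) (v : ℕ → A.carrier) :
    p.eval (A.quot r) (fun n => Quot.mk r (v n)) = Quot.mk r (p.eval A v) := by
  induction p with
  | var x => rfl
  | op ω ts ih =>
      show Quot.mk r (A.interp ω fun i => ((ts i).eval (A.quot r) _).out) = _
      apply Quot.sound
      apply hr.compat
      intro i
      rw [ih i]
      exact out_rel hr _

theorem class_eval {A : Alg Ω ar} {r : A.carrier → A.carrier → Prop} {c : A.carrier}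
    (hcs : ClassIsSub A r c) (p : Term Ω ar ℕ)
    (v : ℕ → (classAlg A r c hcs).carrier) :
    (p.eval (classAlg A r c hcs) v).1 = p.eval A (fun n => (v n).1) := by
  induction p with
  | var x => rfl
  | op ω ts ih =>
      show A.interp ω _ = A.interp ω _
      congr 1; funext i; exact ih i

theorem class_sub_eval {A : Alg Ω ar} {r : A.carrier → A.carrier → Prop} {c : A.carrier}
    (hcs : ClassIsSub A r c) (p : Term Ω ar ℕ) {v : ℕ → A.carrier}
    (h : ∀ n, r (v n) c) : r (p.eval A v) c := by
  induction p with
  | var x => exact h x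
  | op ω ts ih => exact hcs ω _ ih

def tvlist : Term Ω ar ℕ → List ℕ
  | .var x => [x]
  | .op _ ts => (List.ofFn fun i => tvlist (ts i)).flatten

theorem mem_tvlist {p : Term Ω ar ℕ} {x : ℕ} (h : x ∈ p.varSet) : x ∈ tvlist p := by
  induction p with
  | var y =>
      have : x = y := h
      simp [tvlist, this]
  | op ω ts ih =>
      obtain ⟨i, hi⟩ := Set.mem_iUnion.mp h
      exact List.mem_flatten.mpr ⟨tvlist (ts i), List.mem_ofFn.mpr ⟨i, rfl⟩, ih i hi⟩
/-! ### nu3 valuations and collapse lemmas -/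

def nu3 {α : Type} (a b c : α) : ℕ → α := fun n => if n = 0 then a else if n = 1 then b else c

theorem nu3_comp {α β : Type} (φ : α → β) (a b c : α) :
    (fun n => φ (nu3 a b c n)) = nu3 (φ a) (φ b) (φ c) := by
  funext n
  by_cases h0 : n = 0 <;> by_cases h1 : n = 1 <;> simp [nu3, h0, h1]

theorem subst3_eval_001 (M : Alg Ω ar) (t : Term Ω ar ℕ) (x y : M.carrier) :
    (t.subst (sub3 (.var 0) (.var 0) (.var 1))).eval M (fun n => if n = 0 then x else y)
      = t.eval M (nu3 x x y) := by
  rw [subst_eval]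
  congr 1; funext n
  match n with
  | 0 => simp [sub3, Term.eval, nu3]
  | 1 => simp [sub3, Term.eval, nu3]
  | 2 => simp [sub3, Term.eval, nu3]
  | (m+3) => simp [sub3, Term.eval, nu3]

theorem subst3_eval_011 (M : Alg Ω ar) (t : Term Ω ar ℕ) (x y : M.carrier) :
    (t.subst (sub3 (.var 0) (.var 1) (.var 1))).eval M (fun n => if n = 0 then x else y)
      = t.eval M (nu3 x y y) := by
  rw [subst_eval]
  congr 1; funext n
  match n with
  | 0 => simp [sub3, Term.eval, nu3]
  | 1 => simp [sub3, Term.eval, nu3]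
  | 2 => simp [sub3, Term.eval, nu3]
  | (m+3) => simp [sub3, Term.eval, nu3]

theorem quot_eval_nu3 {A : Alg Ω ar} {r : A.carrier → A.carrier → Prop} (hr : IsCongr A r)
    (t : Term Ω ar ℕ) (a b c : A.carrier) :
    t.eval (A.quot r) (nu3 (Quot.mk r a) (Quot.mk r b) (Quot.mk r c))
      = Quot.mk r (t.eval A (nu3 a b c)) := by
  rw [← quot_eval hr t (nu3 a b c)]
  congr 1
  exact (nu3_comp _ a b c).symm

theorem hom_eval_nu3 {A B : Alg Ω ar} (h : Hom A B) (t : Term Ω ar ℕ) (a b c : A.carrier) :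
    h.toFun (t.eval A (nu3 a b c)) = t.eval B (nu3 (h.toFun a) (h.toFun b) (h.toFun c)) := by
  rw [hom_eval h t (nu3 a b c)]
  congr 1
  exact nu3_comp _ a b c

theorem eval_rel_nu3 {A : Alg Ω ar} {r : A.carrier → A.carrier → Prop} (hr : IsCongr A r)
    (t : Term Ω ar ℕ) {a b c a' b' c' : A.carrier}
    (h1 : r a a') (h2 : r b b') (h3 : r c c') :
    r (t.eval A (nu3 a b c)) (t.eval A (nu3 a' b' c')) := by
  apply eval_rel hr
  intro n
  by_cases h0 : n = 0 <;> by_cases hh1 : n = 1 <;> simp [nu3, h0, hh1, h1, h2, h3]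

theorem class_sub_nu3 {A : Alg Ω ar} {r : A.carrier → A.carrier → Prop} {c : A.carrier}
    (hcs : ClassIsSub A r c) (t : Term Ω ar ℕ) {x y z : A.carrier}
    (h1 : r x c) (h2 : r y c) (h3 : r z c) : r (t.eval A (nu3 x y z)) c := by
  apply class_sub_eval hcs
  intro n
  by_cases h0 : n = 0 <;> by_cases hh1 : n = 1 <;> simp [nu3, h0, hh1, h1, h2, h3]

/-- `f(x,y,y) = x` inside a class in `V`. -/
theorem fA_collapse {Ev : Set (Term Ω ar ℕ × Term Ω ar ℕ)} {f : Term Ω ar ℕ}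
    (ha1 : VSat (VarietyOf Ev) (f.subst (sub3 (.var 0) (.var 1) (.var 1))) (.var 0))
    {A : Alg Ω ar} {rA : A.carrier → A.carrier → Prop} {c : A.carrier}
    (hcs : ClassIsSub A rA c) (hV : VarietyOf Ev (classAlg A rA c hcs))
    {x y : A.carrier} (hx : rA x c) (hy : rA y c) :
    f.eval A (nu3 x y y) = x := by
  have h := ha1 _ hV (fun n => if n = 0 then (⟨x, hx⟩ : {w // rA w c}) else ⟨y, hy⟩)
  erw [subst3_eval_011] at h
  have h1 := congrArg Subtype.val h
  rw [class_eval] at h1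
  have e := nu3_comp (Subtype.val : {w // rA w c} → A.carrier) ⟨x, hx⟩ ⟨y, hy⟩ ⟨y, hy⟩
  erw [e] at h1
  exact h1

/-- `g(x,x,y) = y` inside a class in `V`. -/
theorem gA_collapse {Ev : Set (Term Ω ar ℕ × Term Ω ar ℕ)} {g : Term Ω ar ℕ}
    (ha2 : VSat (VarietyOf Ev) (g.subst (sub3 (.var 0) (.var 0) (.var 1))) (.var 1))
    {A : Alg Ω ar} {rA : A.carrier → A.carrier → Prop} {c : A.carrier}
    (hcs : ClassIsSub A rA c) (hV : VarietyOf Ev (classAlg A rA c hcs))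
    {x y : A.carrier} (hx : rA x c) (hy : rA y c) :
    g.eval A (nu3 x x y) = y := by
  have h := ha2 _ hV (fun n => if n = 0 then (⟨x, hx⟩ : {w // rA w c}) else ⟨y, hy⟩)
  erw [subst3_eval_001] at h
  have h1 := congrArg Subtype.val h
  rw [class_eval] at h1
  have e := nu3_comp (Subtype.val : {w // rA w c} → A.carrier) ⟨x, hx⟩ ⟨x, hx⟩ ⟨y, hy⟩
  erw [e] at h1
  exact h1
/-! ### Congruence generation machinery -/

theorem compat_of_update {A : Alg Ω ar} {R : A.carrier → A.carrier → Prop}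
    (hrefl : ∀ a, R a a) (htrans : ∀ {a b c}, R a b → R b c → R a c)
    (hupd : ∀ (ω : Ω) (fargs : Fin (ar ω) → A.carrier) (i : Fin (ar ω)) (a b : A.carrier),
      R a b → R (A.interp ω (Function.update fargs i a)) (A.interp ω (Function.update fargs i b)))
    (ω : Ω) (fa ga : Fin (ar ω) → A.carrier) (h : ∀ i, R (fa i) (ga i)) :
    R (A.interp ω fa) (A.interp ω ga) := by
  let hyb : ℕ → (Fin (ar ω) → A.carrier) := fun k j => if (j : ℕ) < k then ga j else fa j
  have main : ∀ k : ℕ, R (A.interp ω fa) (A.interp ω (hyb k)) := by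
    intro k
    induction k with
    | zero =>
        have : hyb 0 = fa := by funext j; simp [hyb]
        rw [this]; exact hrefl _
    | succ k ih =>
        by_cases hk : k < ar ω
        · set i : Fin (ar ω) := ⟨k, hk⟩
          have e1 : Function.update (hyb k) i (fa i) = hyb k := by
            funext j
            by_cases hj : j = i
            · subst hj; simp [hyb, Function.update, i]
            · simp [Function.update, hj]
          have e2 : Function.update (hyb k) i (ga i) = hyb (k+1) := by
            funext j
            by_cases hj : j = i
            · subst hj; simp [hyb, Function.update, i]
            · have hne : (j : ℕ) ≠ k := by
                intro hc; exact hj (Fin.ext hc)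
              have : ((j : ℕ) < k + 1) ↔ ((j : ℕ) < k) := by omega
              simp [hyb, Function.update, hj, this]
          have step := hupd ω (hyb k) i (fa i) (ga i) (h i)
          rw [e1, e2] at step
          exact htrans ih step
        · have : hyb (k+1) = hyb k := by
            funext j
            have hj : (j : ℕ) < k := lt_of_lt_of_le j.isLt (by omega)
            have hj' : (j : ℕ) < k + 1 := by omega
            simp [hyb, hj, hj']
          rw [this]; exact ih
  have hfin : hyb (ar ω) = ga := by
    funext j; simp [hyb, j.isLt]
  have := main (ar ω)
  rwa [hfin] at this

theorem isCongr_eqvGen {A : Alg Ω ar} {R : A.carrier → A.carrier → Prop}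
    (hupd : ∀ (ω : Ω) (fargs : Fin (ar ω) → A.carrier) (i : Fin (ar ω)) (a b : A.carrier),
      R a b → Relation.EqvGen R (A.interp ω (Function.update fargs i a))
        (A.interp ω (Function.update fargs i b))) :
    IsCongr A (Relation.EqvGen R) := by
  have hupd' : ∀ (ω : Ω) (fargs : Fin (ar ω) → A.carrier) (i : Fin (ar ω)) (a b : A.carrier),
      Relation.EqvGen R a b → Relation.EqvGen R (A.interp ω (Function.update fargs i a))
        (A.interp ω (Function.update fargs i b)) := by
    intro ω fargs i a b hab
    induction hab with
    | rel x y hxy => exact hupd ω fargs i x y hxy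
    | refl x => exact Relation.EqvGen.refl _
    | symm x y _ ih => exact Relation.EqvGen.symm _ _ ih
    | trans x y z _ _ ih1 ih2 => exact Relation.EqvGen.trans _ _ _ ih1 ih2
  refine ⟨fun a => Relation.EqvGen.refl a, fun h => Relation.EqvGen.symm _ _ h,
    fun h1 h2 => Relation.EqvGen.trans _ _ _ h1 h2, ?_⟩
  exact compat_of_update (Relation.EqvGen.refl)
    (fun h1 h2 => Relation.EqvGen.trans _ _ _ h1 h2) hupd'

theorem models_quot_of_insts {Ew : Set (Term Ω ar ℕ × Term Ω ar ℕ)} {A : Alg Ω ar}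
    {s : A.carrier → A.carrier → Prop} (hs : IsCongr A s)
    (hinst : ∀ e ∈ Ew, ∀ w : ℕ → A.carrier, s (Term.eval A w e.1) (Term.eval A w e.2)) :
    Models (A.quot s) Ew := by
  intro e he v
  have hv : v = fun n => Quot.mk s ((v n).out) := by
    funext n; exact (Quot.out_eq _).symm
  rw [hv, quot_eval hs, quot_eval hs]
  exact Quot.sound (hinst e he _)

/-- The intersection of all congruences with quotient in `W`. -/
def interCong (Ew : Set (Term Ω ar ℕ × Term Ω ar ℕ)) (A : Alg Ω ar) :
    A.carrier → A.carrier → Prop :=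
  fun a b => ∀ s : A.carrier → A.carrier → Prop, IsCongr A s → Models (A.quot s) Ew → s a b

theorem isCongr_interCong (Ew : Set (Term Ω ar ℕ × Term Ω ar ℕ)) (A : Alg Ω ar) :
    IsCongr A (interCong Ew A) := by
  refine ⟨fun a s hs _ => hs.refl a, fun h s hs hm => hs.symm (h s hs hm),
    fun h h' s hs hm => hs.trans (h s hs hm) (h' s hs hm),
    fun ω F G h s hs hm => hs.compat ω F G (fun i => h i s hs hm)⟩

theorem models_quot_interCong (Ew : Set (Term Ω ar ℕ × Term Ω ar ℕ)) (A : Alg Ω ar) :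
    Models (A.quot (interCong Ew A)) Ew := by
  apply models_quot_of_insts (isCongr_interCong Ew A)
  intro e he w s hs hm
  apply rel_of_quot_eq hs
  rw [← quot_eval hs, ← quot_eval hs]
  exact hm e he _

theorem isReplica_interCong (Ew : Set (Term Ω ar ℕ × Term Ω ar ℕ)) (A : Alg Ω ar) :
    IsReplica (VarietyOf Ew) A (interCong Ew A) :=
  ⟨isCongr_interCong Ew A, models_quot_interCong Ew A,
    fun s hs hm _ _ hab => hab s hs hm⟩

/-- Good elements: the class is the value of a term idempotent. -/
def GoodCl (Ew : Set (Term Ω ar ℕ × Term Ω ar ℕ)) {A : Alg Ω ar}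
    (rA : A.carrier → A.carrier → Prop) (u : A.carrier) : Prop :=
  ∃ (t : Term Ω ar ℕ) (νq : ℕ → (A.quot rA).carrier),
    TermIdem (VarietyOf Ew) t ∧ Quot.mk rA u = t.eval (A.quot rA) νq

theorem classIsSub_of_good {Ew : Set (Term Ω ar ℕ × Term Ω ar ℕ)} {A : Alg Ω ar}
    {rA : A.carrier → A.carrier → Prop} (hrA : IsCongr A rA)
    (hqA : Models (A.quot rA) Ew) {v : A.carrier}
    (hg : GoodCl Ew rA v) : ClassIsSub A rA v := by
  obtain ⟨t, νq, ht, hv⟩ := hg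
  intro ω args hargs
  apply rel_of_quot_eq hrA
  have h1 : Quot.mk rA (A.interp ω args) = (A.quot rA).interp ω (fun i => Quot.mk rA (args i)) := by
    show _ = Quot.mk rA (A.interp ω fun i => (Quot.mk rA (args i)).out)
    exact Quot.sound (hrA.compat ω _ _ fun i => hrA.symm (out_rel hrA (args i)))
  have h2 : (fun i => Quot.mk rA (args i)) = (fun _ : Fin (ar ω) => t.eval (A.quot rA) νq) := by
    funext i; rw [Quot.sound (hargs i), hv]
  have h3 : (A.quot rA).interp ω (fun _ => t.eval (A.quot rA) νq)
      = (Term.op ω (fun _ => t)).eval (A.quot rA) νq := rfl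
  rw [h1, h2, h3, ht ω (A.quot rA) hqA νq, hv]
/-! ### The generated replica congruence on the image algebra -/

inductive EwStep (Ew : Set (Term Ω ar ℕ × Term Ω ar ℕ)) (B : Alg Ω ar) :
    B.carrier → B.carrier → Prop
  | inst (p q : Term Ω ar ℕ) (hpq : (p, q) ∈ Ew) (v : ℕ → B.carrier) :
      EwStep Ew B (p.eval B v) (q.eval B v)
  | lift (ω : Ω) (fargs : Fin (ar ω) → B.carrier) (i : Fin (ar ω)) (a b : B.carrier) :
      EwStep Ew B a b →
      EwStep Ew B (B.interp ω (Function.update fargs i a)) (B.interp ω (Function.update fargs i b))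

theorem isCongr_ewGen (Ew : Set (Term Ω ar ℕ × Term Ω ar ℕ)) (B : Alg Ω ar) :
    IsCongr B (Relation.EqvGen (EwStep Ew B)) :=
  isCongr_eqvGen (fun ω fargs i a b hab =>
    Relation.EqvGen.rel _ _ (EwStep.lift ω fargs i a b hab))

theorem models_quot_ewGen (Ew : Set (Term Ω ar ℕ × Term Ω ar ℕ)) (B : Alg Ω ar) :
    Models (B.quot (Relation.EqvGen (EwStep Ew B))) Ew := by
  apply models_quot_of_insts (isCongr_ewGen Ew B)
  intro e he w
  exact Relation.EqvGen.rel _ _ (EwStep.inst e.1 e.2 (by simpa using he) w)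

theorem ewStep_pair {Ew : Set (Term Ω ar ℕ × Term Ω ar ℕ)} {B : Alg Ω ar} {a b : B.carrier}
    (h : EwStep Ew B a b) :
    ∃ (T₁ T₂ : Term Ω ar ℕ) (w : ℕ → B.carrier),
      VSat (VarietyOf Ew) T₁ T₂ ∧ a = T₁.eval B w ∧ b = T₂.eval B w := by
  induction h with
  | inst p q hpq v => exact ⟨p, q, v, fun C hC => hC (p, q) hpq, rfl, rfl⟩
  | lift ω fargs i a b hab ih =>
      obtain ⟨T₁, T₂, w, hV, ha, hb⟩ := ih
      refine ⟨Term.op ω (fun i' => if i' = i then T₁.subst (fun n => .var (n + ar ω)) else .var i'.val),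
              Term.op ω (fun i' => if i' = i then T₂.subst (fun n => .var (n + ar ω)) else .var i'.val),
              (fun n => if hn : n < ar ω then fargs ⟨n, hn⟩ else w (n - ar ω)), ?_, ?_, ?_⟩
      · intro C hC u
        show C.interp ω _ = C.interp ω _
        congr 1; funext i'
        by_cases hii : i' = i
        · simp only [hii, if_pos]
          rw [subst_eval, subst_eval]
          exact hV C hC _
        · simp only [if_neg hii]
      · show B.interp ω _ = B.interp ω _
        congr 1; funext i'
        by_cases hii : i' = i
        · subst hii
          simp only [if_pos, Function.update_self]
          rw [ha, subst_eval]
          congr 1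
          funext n
          show w n = (if hn : n + ar ω < ar ω then fargs ⟨n + ar ω, hn⟩ else w (n + ar ω - ar ω))
          rw [dif_neg (by omega)]
          congr 1
          omega
        · simp only [if_neg hii, Function.update_of_ne hii]
          show fargs i' = (if hn : (i' : ℕ) < ar ω then fargs ⟨(i' : ℕ), hn⟩ else w ((i' : ℕ) - ar ω))
          rw [dif_pos i'.isLt]
      · show B.interp ω _ = B.interp ω _
        congr 1; funext i'
        by_cases hii : i' = i
        · subst hii
          simp only [if_pos, Function.update_self]
          rw [hb, subst_eval]
          congr 1
          funext n
          show w n = (if hn : n + ar ω < ar ω then fargs ⟨n + ar ω, hn⟩ else w (n + ar ω - ar ω))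
          rw [dif_neg (by omega)]
          congr 1
          omega
        · simp only [if_neg hii, Function.update_of_ne hii]
          show fargs i' = (if hn : (i' : ℕ) < ar ω then fargs ⟨(i' : ℕ), hn⟩ else w ((i' : ℕ) - ar ω))
          rw [dif_pos i'.isLt]

/-- Elements of nonsingleton classes of the generated congruence are values of
term idempotents. -/
theorem tiexpr_of_eqvGen {Ew : Set (Term Ω ar ℕ × Term Ω ar ℕ)}
    (hti : TermIdemVariety (VarietyOf Ew)) {B : Alg Ω ar} {a b : B.carrier}
    (h : Relation.EqvGen (EwStep Ew B) a b) :
    a = b ∨ ((∃ (t : Term Ω ar ℕ) (ν : ℕ → B.carrier),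
        TermIdem (VarietyOf Ew) t ∧ a = t.eval B ν) ∧
      (∃ (t : Term Ω ar ℕ) (ν : ℕ → B.carrier),
        TermIdem (VarietyOf Ew) t ∧ b = t.eval B ν)) := by
  induction h with
  | rel a b hab =>
      obtain ⟨T₁, T₂, w, hV, ha, hb⟩ := ewStep_pair hab
      by_cases hT : T₁ = T₂
      · left; rw [ha, hb, hT]
      · right
        obtain ⟨h1, h2⟩ := hti T₁ T₂ hV hT
        exact ⟨⟨T₁, w, h1, ha⟩, ⟨T₂, w, h2, hb⟩⟩
  | refl a => left; rfl
  | symm a b _ ih =>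
      rcases ih with h | ⟨h1, h2⟩
      · left; exact h.symm
      · right; exact ⟨h2, h1⟩
  | trans a b c _ _ ih1 ih2 =>
      rcases ih1 with h1 | ⟨ha, hb⟩
      · rcases ih2 with h2 | ⟨hb', hc⟩
        · left; exact h1.trans h2
        · right; exact ⟨h1 ▸ hb', hc⟩
      · rcases ih2 with h2 | ⟨hb', hc⟩
        · right; exact ⟨ha, h2 ▸ hb⟩
        · right; exact ⟨ha, hc⟩
/-! ### Transport of states along good chains -/

def GStep (Ew : Set (Term Ω ar ℕ × Term Ω ar ℕ)) {A B : Alg Ω ar} (hom : Hom A B)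
    (rA : A.carrier → A.carrier → Prop) (a b : A.carrier) : Prop :=
  (rA a b ∧ GoodCl Ew rA a ∧ GoodCl Ew rA b) ∨ hom.toFun a = hom.toFun b

def TState (Ew : Set (Term Ω ar ℕ × Term Ω ar ℕ)) {A B : Alg Ω ar} (hom : Hom A B)
    (rA : A.carrier → A.carrier → Prop) (zs : List B.carrier) (u : A.carrier) : Prop :=
  ∃ (c : A.carrier) (sel : B.carrier → A.carrier) (uh : A.carrier),
    GoodCl Ew rA c ∧ (∀ z ∈ zs, rA (sel z) c ∧ hom.toFun (sel z) = z) ∧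
    rA uh c ∧ hom.toFun uh = hom.toFun u

theorem tstate_transport {Ev Ew : Set (Term Ω ar ℕ × Term Ω ar ℕ)}
    {f g : Term Ω ar ℕ}
    (ha1 : VSat (VarietyOf Ev) (f.subst (sub3 (.var 0) (.var 1) (.var 1))) (.var 0))
    (ha2 : VSat (VarietyOf Ev) (g.subst (sub3 (.var 0) (.var 0) (.var 1))) (.var 1))
    (hbW : VSat (VarietyOf Ew) (f.subst (sub3 (.var 0) (.var 0) (.var 1)))
                               (g.subst (sub3 (.var 0) (.var 0) (.var 1))))
    (hcF : TermIdem (VarietyOf Ew) (f.subst (sub3 (.var 0) (.var 0) (.var 1))))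
    {A B : Alg Ω ar} (hom : Hom A B)
    {rA : A.carrier → A.carrier → Prop} (hrA : IsCongr A rA)
    (hqA : Models (A.quot rA) Ew)
    (hrepA : IsReplica (VarietyOf Ew) A rA)
    (hMA : MalProd (VarietyOf Ev) (VarietyOf Ew) A)
    {u u' : A.carrier} (huu' : rA u u') (hGu : GoodCl Ew rA u)
    (zs : List B.carrier)
    (hTS : TState Ew hom rA zs u) : TState Ew hom rA zs u' := by
  obtain ⟨c, sel, uA, hGc, hsel, huAc, huAh⟩ := hTS
  have hcsc : ClassIsSub A rA c := classIsSub_of_good hrA hqA hGc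
  have hVc : VarietyOf Ev (classAlg A rA c hcsc) := hMA rA hrepA c hcsc
  have hcsu : ClassIsSub A rA u := classIsSub_of_good hrA hqA hGu
  have hVu : VarietyOf Ev (classAlg A rA u hcsu) := hMA rA hrepA u hcsu
  have hclsu : Quot.mk rA u' = Quot.mk rA u := Quot.sound (hrA.symm huu')
  have hclsuAc : Quot.mk rA uA = Quot.mk rA c := Quot.sound huAc
  -- abbreviations (as plain terms)
  have hXq : Quot.mk rA (f.eval A (nu3 u' u uA))
      = f.eval (A.quot rA) (nu3 (Quot.mk rA u) (Quot.mk rA u) (Quot.mk rA uA)) := by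
    rw [← quot_eval_nu3 hrA f u' u uA, hclsu]
  have hαq : Quot.mk rA (f.eval A (nu3 u u uA))
      = f.eval (A.quot rA) (nu3 (Quot.mk rA u) (Quot.mk rA u) (Quot.mk rA uA)) :=
    (quot_eval_nu3 hrA f u u uA).symm
  have huA'q : Quot.mk rA (f.eval A (nu3 (f.eval A (nu3 u' u uA)) (f.eval A (nu3 u u uA)) uA))
      = f.eval (A.quot rA)
          (nu3 (f.eval (A.quot rA) (nu3 (Quot.mk rA u) (Quot.mk rA u) (Quot.mk rA uA)))
               (f.eval (A.quot rA) (nu3 (Quot.mk rA u) (Quot.mk rA u) (Quot.mk rA uA)))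
               (Quot.mk rA uA)) := by
    rw [← quot_eval_nu3 hrA f _ _ uA, hXq, hαq]
  -- goodness of the new anchor
  have hGuA' : GoodCl Ew rA (f.eval A (nu3 (f.eval A (nu3 u' u uA)) (f.eval A (nu3 u u uA)) uA)) := by
    refine ⟨f.subst (sub3 (.var 0) (.var 0) (.var 1)),
      (fun n => if n = 0 then
          f.eval (A.quot rA) (nu3 (Quot.mk rA u) (Quot.mk rA u) (Quot.mk rA uA))
        else Quot.mk rA uA), hcF, ?_⟩
    erw [subst3_eval_001]
    exact huA'q
  -- class computation for transported tuple elements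
  have hselq : ∀ z ∈ zs,
      Quot.mk rA (g.eval A (nu3 (f.eval A (nu3 u u (sel z))) (f.eval A (nu3 u u (sel z))) (sel z)))
        = Quot.mk rA (f.eval A (nu3 (f.eval A (nu3 u' u uA)) (f.eval A (nu3 u u uA)) uA)) := by
    intro z hz
    have hzc : Quot.mk rA (sel z) = Quot.mk rA uA :=
      (Quot.sound (hsel z hz).1).trans hclsuAc.symm
    have hdz : Quot.mk rA (f.eval A (nu3 u u (sel z)))
        = f.eval (A.quot rA) (nu3 (Quot.mk rA u) (Quot.mk rA u) (Quot.mk rA uA)) := by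
      rw [← quot_eval_nu3 hrA f u u (sel z), hzc]
    have h1 : Quot.mk rA (g.eval A (nu3 (f.eval A (nu3 u u (sel z))) (f.eval A (nu3 u u (sel z))) (sel z)))
        = g.eval (A.quot rA)
            (nu3 (f.eval (A.quot rA) (nu3 (Quot.mk rA u) (Quot.mk rA u) (Quot.mk rA uA)))
                 (f.eval (A.quot rA) (nu3 (Quot.mk rA u) (Quot.mk rA u) (Quot.mk rA uA)))
                 (Quot.mk rA uA)) := by
      rw [← quot_eval_nu3 hrA g _ _ (sel z), hdz, hzc]
    have hfg : f.eval (A.quot rA)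
        (nu3 (f.eval (A.quot rA) (nu3 (Quot.mk rA u) (Quot.mk rA u) (Quot.mk rA uA)))
             (f.eval (A.quot rA) (nu3 (Quot.mk rA u) (Quot.mk rA u) (Quot.mk rA uA)))
             (Quot.mk rA uA))
        = g.eval (A.quot rA)
            (nu3 (f.eval (A.quot rA) (nu3 (Quot.mk rA u) (Quot.mk rA u) (Quot.mk rA uA)))
                 (f.eval (A.quot rA) (nu3 (Quot.mk rA u) (Quot.mk rA u) (Quot.mk rA uA)))
                 (Quot.mk rA uA)) := by
      have := hbW (A.quot rA) hqA
        (fun n => if n = 0 then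
            f.eval (A.quot rA) (nu3 (Quot.mk rA u) (Quot.mk rA u) (Quot.mk rA uA))
          else Quot.mk rA uA)
      erw [subst3_eval_001, subst3_eval_001] at this
      exact this
    rw [h1, ← hfg, huA'q]
  -- collapses inside the class of u
  have hXcol : f.eval A (nu3 u' u u) = u' := fA_collapse ha1 hcsu hVu (hrA.symm huu') (hrA.refl u)
  have hucol : f.eval A (nu3 u u u) = u := fA_collapse ha1 hcsu hVu (hrA.refl u) (hrA.refl u)
  -- hom image of the new anchor
  have homuA' : hom.toFun (f.eval A (nu3 (f.eval A (nu3 u' u uA)) (f.eval A (nu3 u u uA)) uA))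
      = hom.toFun u' := by
    have h1 := hom_eval_nu3 hom f (f.eval A (nu3 u' u uA)) (f.eval A (nu3 u u uA)) uA
    have hX' := hom_eval_nu3 hom f u' u uA
    have hα' := hom_eval_nu3 hom f u u uA
    rw [huAh] at h1 hX' hα'
    have c1 : f.eval B (nu3 (hom.toFun u') (hom.toFun u) (hom.toFun u)) = hom.toFun u' := by
      rw [← hom_eval_nu3 hom f u' u u, hXcol]
    have c2 : f.eval B (nu3 (hom.toFun u) (hom.toFun u) (hom.toFun u)) = hom.toFun u := by
      rw [← hom_eval_nu3 hom f u u u, hucol]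
    rw [h1, hX', hα', c1, c2]
    exact c1
  -- hom images of the transported tuple elements
  have homsel' : ∀ z ∈ zs,
      hom.toFun (g.eval A (nu3 (f.eval A (nu3 u u (sel z))) (f.eval A (nu3 u u (sel z))) (sel z)))
        = z := by
    intro z hz
    obtain ⟨hzr, hzh⟩ := hsel z hz
    have hβc : rA (f.eval A (nu3 uA uA (sel z))) c := class_sub_nu3 hcsc f huAc huAc hzr
    have hgcol : g.eval A (nu3 (f.eval A (nu3 uA uA (sel z))) (f.eval A (nu3 uA uA (sel z))) (sel z))
        = sel z := gA_collapse ha2 hcsc hVc hβc hzr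
    have h1 := hom_eval_nu3 hom g (f.eval A (nu3 u u (sel z))) (f.eval A (nu3 u u (sel z))) (sel z)
    have h2 := hom_eval_nu3 hom f u u (sel z)
    have h3 := hom_eval_nu3 hom f uA uA (sel z)
    rw [huAh] at h3
    have h4 := hom_eval_nu3 hom g (f.eval A (nu3 uA uA (sel z))) (f.eval A (nu3 uA uA (sel z))) (sel z)
    rw [hgcol, h3, ← h2] at h4
    rw [h1, ← h4]
    exact hzh
  refine ⟨f.eval A (nu3 (f.eval A (nu3 u' u uA)) (f.eval A (nu3 u u uA)) uA),
    (fun z => g.eval A (nu3 (f.eval A (nu3 u u (sel z))) (f.eval A (nu3 u u (sel z))) (sel z))),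
    f.eval A (nu3 (f.eval A (nu3 u' u uA)) (f.eval A (nu3 u u uA)) uA),
    hGuA', ?_, hrA.refl _, homuA'⟩
  intro z hz
  exact ⟨rel_of_quot_eq hrA (hselq z hz), homsel' z hz⟩
/-! ### Chains -/

theorem tstate_iff {Ev Ew : Set (Term Ω ar ℕ × Term Ω ar ℕ)}
    {f g : Term Ω ar ℕ}
    (ha1 : VSat (VarietyOf Ev) (f.subst (sub3 (.var 0) (.var 1) (.var 1))) (.var 0))
    (ha2 : VSat (VarietyOf Ev) (g.subst (sub3 (.var 0) (.var 0) (.var 1))) (.var 1))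
    (hbW : VSat (VarietyOf Ew) (f.subst (sub3 (.var 0) (.var 0) (.var 1)))
                               (g.subst (sub3 (.var 0) (.var 0) (.var 1))))
    (hcF : TermIdem (VarietyOf Ew) (f.subst (sub3 (.var 0) (.var 0) (.var 1))))
    {A B : Alg Ω ar} (hom : Hom A B)
    {rA : A.carrier → A.carrier → Prop} (hrA : IsCongr A rA)
    (hqA : Models (A.quot rA) Ew)
    (hrepA : IsReplica (VarietyOf Ew) A rA)
    (hMA : MalProd (VarietyOf Ev) (VarietyOf Ew) A)
    (zs : List B.carrier)
    {u u' : A.carrier} (h : Relation.EqvGen (GStep Ew hom rA) u u') :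
    TState Ew hom rA zs u ↔ TState Ew hom rA zs u' := by
  induction h with
  | rel a b hab =>
      rcases hab with ⟨hr, hga, hgb⟩ | heq
      · exact ⟨tstate_transport ha1 ha2 hbW hcF hom hrA hqA hrepA hMA hr hga zs,
          tstate_transport ha1 ha2 hbW hcF hom hrA hqA hrepA hMA (hrA.symm hr) hgb zs⟩
      · constructor
        · rintro ⟨c, sel, uh, h1, h2, h3, h4⟩
          exact ⟨c, sel, uh, h1, h2, h3, h4.trans heq⟩
        · rintro ⟨c, sel, uh, h1, h2, h3, h4⟩
          exact ⟨c, sel, uh, h1, h2, h3, h4.trans heq.symm⟩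
  | refl a => exact Iff.rfl
  | symm a b _ ih => exact ih.symm
  | trans a b c _ _ ih1 ih2 => exact ih1.trans ih2

theorem goodCl_delta {Ew : Set (Term Ω ar ℕ × Term Ω ar ℕ)} {f : Term Ω ar ℕ}
    {A : Alg Ω ar} {rA : A.carrier → A.carrier → Prop} (hrA : IsCongr A rA)
    (hcF : TermIdem (VarietyOf Ew) (f.subst (sub3 (.var 0) (.var 0) (.var 1))))
    (u : A.carrier) : GoodCl Ew rA (f.eval A (nu3 u u u)) := by
  refine ⟨f.subst (sub3 (.var 0) (.var 0) (.var 1)),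
    (fun _ => Quot.mk rA u), hcF, ?_⟩
  have : (fun _ : ℕ => Quot.mk rA u) = (fun n : ℕ => if n = 0 then Quot.mk rA u else Quot.mk rA u) := by
    funext n; simp
  rw [this]; erw [subst3_eval_001]
  have h2 : nu3 (Quot.mk rA u) (Quot.mk rA u) (Quot.mk rA u) = nu3 (Quot.mk rA u) (Quot.mk rA u) (Quot.mk rA u) := rfl
  exact (quot_eval_nu3 hrA f u u u).symm

theorem gchain_delta {Ew : Set (Term Ω ar ℕ × Term Ω ar ℕ)} {f : Term Ω ar ℕ}
    {A B : Alg Ω ar} (hom : Hom A B)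
    {rA : A.carrier → A.carrier → Prop} (hrA : IsCongr A rA)
    (hcF : TermIdem (VarietyOf Ew) (f.subst (sub3 (.var 0) (.var 0) (.var 1))))
    {u u' : A.carrier}
    (hs : Relation.EqvGen (fun a b => rA a b ∨ hom.toFun a = hom.toFun b) u u') :
    Relation.EqvGen (GStep Ew hom rA) (f.eval A (nu3 u u u)) (f.eval A (nu3 u' u' u')) := by
  induction hs with
  | rel a b hab =>
      rcases hab with hr | heq
      · exact Relation.EqvGen.rel _ _ (Or.inl ⟨eval_rel_nu3 hrA f hr hr hr,
          goodCl_delta hrA hcF a, goodCl_delta hrA hcF b⟩)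
      · refine Relation.EqvGen.rel _ _ (Or.inr ?_)
        rw [hom_eval_nu3, hom_eval_nu3, heq]
  | refl a => exact Relation.EqvGen.refl _
  | symm a b _ ih => exact Relation.EqvGen.symm _ _ ih
  | trans a b c _ _ ih1 ih2 => exact Relation.EqvGen.trans _ _ _ ih1 ih2

theorem gstep_self_delta {Ew : Set (Term Ω ar ℕ × Term Ω ar ℕ)} {f : Term Ω ar ℕ}
    {A B : Alg Ω ar} (hom : Hom A B)
    {rA : A.carrier → A.carrier → Prop} (hrA : IsCongr A rA)
    (hqA : Models (A.quot rA) Ew)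
    (hcF : TermIdem (VarietyOf Ew) (f.subst (sub3 (.var 0) (.var 0) (.var 1))))
    {u : A.carrier} (hGu : GoodCl Ew rA u) :
    GStep Ew hom rA u (f.eval A (nu3 u u u)) :=
  Or.inl ⟨hrA.symm (class_sub_nu3 (classIsSub_of_good hrA hqA hGu) f
      (hrA.refl u) (hrA.refl u) (hrA.refl u)), hGu, goodCl_delta hrA hcF u⟩

theorem schain_of_rho {Ew : Set (Term Ω ar ℕ × Term Ω ar ℕ)}
    {A B : Alg Ω ar} (hom : Hom A B) (hsurj : Function.Surjective hom.toFun)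
    {rA : A.carrier → A.carrier → Prop} (hrA : IsCongr A rA)
    (hqA : Models (A.quot rA) Ew)
    {ρ : B.carrier → B.carrier → Prop} (hρ : IsReplica (VarietyOf Ew) B ρ)
    {x y : A.carrier} (hxy : ρ (hom.toFun x) (hom.toFun y)) :
    Relation.EqvGen (fun a b => rA a b ∨ hom.toFun a = hom.toFun b) x y := by
  classical
  have hs'c : IsCongr A (Relation.EqvGen (fun a b => rA a b ∨ hom.toFun a = hom.toFun b)) := by
    apply isCongr_eqvGen
    intro ω fargs i a b hab
    rcases hab with hr | heq
    · refine Relation.EqvGen.rel _ _ (Or.inl (hrA.compat ω _ _ ?_))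
      intro j
      by_cases hj : j = i
      · subst hj; simp only [Function.update_self]; exact hr
      · simp only [Function.update_of_ne hj]; exact hrA.refl _
    · refine Relation.EqvGen.rel _ _ (Or.inr ?_)
      rw [hom.map, hom.map]
      congr 1
      funext j
      by_cases hj : j = i
      · subst hj; simp [Function.update_self, heq]
      · simp [Function.update_of_ne hj]
  have hρ'c : IsCongr B (fun b1 b2 : B.carrier => ∃ a1 a2 : A.carrier,
      hom.toFun a1 = b1 ∧ hom.toFun a2 = b2 ∧
        Relation.EqvGen (fun a b => rA a b ∨ hom.toFun a = hom.toFun b) a1 a2) := by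
    constructor
    · intro bb; obtain ⟨a, ha⟩ := hsurj bb
      exact ⟨a, a, ha, ha, Relation.EqvGen.refl a⟩
    · rintro b1 b2 ⟨a1, a2, h1, h2, hs⟩
      exact ⟨a2, a1, h2, h1, Relation.EqvGen.symm _ _ hs⟩
    · rintro b1 b2 b3 ⟨a1, a2, h1, h2, h12⟩ ⟨a2', a3, h2', h3, h23⟩
      exact ⟨a1, a3, h1, h3, Relation.EqvGen.trans _ _ _ h12
        (Relation.EqvGen.trans _ _ _ (Relation.EqvGen.rel _ _ (Or.inr (h2.trans h2'.symm))) h23)⟩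
    · intro ω F G hFG
      choose a1 a2 h1 h2 hs using hFG
      refine ⟨A.interp ω a1, A.interp ω a2, ?_, ?_, hs'c.compat ω a1 a2 hs⟩
      · rw [hom.map]; exact congrArg _ (funext h1)
      · rw [hom.map]; exact congrArg _ (funext h2)
  have hρ'm : Models (B.quot (fun b1 b2 : B.carrier => ∃ a1 a2 : A.carrier,
      hom.toFun a1 = b1 ∧ hom.toFun a2 = b2 ∧
        Relation.EqvGen (fun a b => rA a b ∨ hom.toFun a = hom.toFun b) a1 a2)) Ew := by
    apply models_quot_of_insts hρ'c
    intro e he w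
    refine ⟨e.1.eval A (fun n => (hsurj (w n)).choose),
            e.2.eval A (fun n => (hsurj (w n)).choose), ?_, ?_,
            Relation.EqvGen.rel _ _ (Or.inl ?_)⟩
    · rw [hom_eval]; congr 1; funext n; exact (hsurj (w n)).choose_spec
    · rw [hom_eval]; congr 1; funext n; exact (hsurj (w n)).choose_spec
    · apply rel_of_quot_eq hrA
      rw [← quot_eval hrA, ← quot_eval hrA]
      exact hqA e he _
  have key := hρ.2.2 _ hρ'c hρ'm _ _ hxy
  obtain ⟨a1, a2, h1, h2, hs⟩ := key
  exact Relation.EqvGen.trans _ _ _ (Relation.EqvGen.rel _ _ (Or.inr h1.symm))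
    (Relation.EqvGen.trans _ _ _ hs (Relation.EqvGen.rel _ _ (Or.inr h2)))
/-- main theorem: if `W` is term idempotent and there are terms
`f(x,y,z)`, `g(x,y,z)` with `V ⊨ f(x,y,y) = x`, `V ⊨ g(x,x,y) = y`,
`W ⊨ f(x,x,y) = g(x,x,y)` and `f(x,x,y)` a term idempotent of `W`, then
`V ∘ W` is closed under homomorphic images (hence a variety). -/
theorem stmt_12 {Ω : Type} {ar : Ω → ℕ} (hτ : ∀ ω, 0 < ar ω)
    (Ev Ew : Set (Term Ω ar ℕ × Term Ω ar ℕ))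
    (hti : TermIdemVariety (VarietyOf Ew))
    (f g : Term Ω ar ℕ)
    (hf : f.varSet ⊆ {0, 1, 2}) (hg : g.varSet ⊆ {0, 1, 2})
    (ha1 : VSat (VarietyOf Ev) (f.subst (sub3 (.var 0) (.var 1) (.var 1))) (.var 0))
    (ha2 : VSat (VarietyOf Ev) (g.subst (sub3 (.var 0) (.var 0) (.var 1))) (.var 1))
    (hb : VSat (VarietyOf Ew) (f.subst (sub3 (.var 0) (.var 0) (.var 1)))
                              (g.subst (sub3 (.var 0) (.var 0) (.var 1))))
    (hc : TermIdem (VarietyOf Ew) (f.subst (sub3 (.var 0) (.var 0) (.var 1)))) :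
    ∀ (A B : Alg Ω ar) (h : Hom A B), Function.Surjective h.toFun →
      MalProd (VarietyOf Ev) (VarietyOf Ew) A →
      MalProd (VarietyOf Ev) (VarietyOf Ew) B := by
  intro A B hom hsurj hMA
  intro ρ hρ b hbsub
  intro e he ν
  classical
  by_cases hfat : ∀ z z' : B.carrier, ρ z b → ρ z' b → z = z'
  · exact Subtype.ext (hfat _ _ (Term.eval (classAlg B ρ b hbsub) ν e.1).2
      (Term.eval (classAlg B ρ b hbsub) ν e.2).2)
  push_neg at hfat
  obtain ⟨z0, z0', hz0, hz0', hne⟩ := hfat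
  -- the replica congruence of A
  have hrA := isCongr_interCong Ew A
  have hqA := models_quot_interCong Ew A
  have hrepA := isReplica_interCong Ew A
  -- the replica congruence of B is contained in the generated congruence
  have hρr0 : ∀ z z', ρ z z' → Relation.EqvGen (EwStep Ew B) z z' :=
    hρ.2.2 _ (isCongr_ewGen Ew B) (models_quot_ewGen Ew B)
  -- every element of the (fat) class of b has a good lift
  have goodlift : ∀ z, ρ z b →
      ∃ v : A.carrier, hom.toFun v = z ∧ GoodCl Ew (interCong Ew A) v := by
    intro z hz
    have hz' : ∃ z', ρ z z' ∧ z ≠ z' := by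
      by_cases hzz : z = z0
      · exact ⟨z0', hρ.1.trans hz (hρ.1.symm hz0'), hzz ▸ hne⟩
      · exact ⟨z0, hρ.1.trans hz (hρ.1.symm hz0), hzz⟩
    obtain ⟨z', hzz', hnee⟩ := hz'
    rcases tiexpr_of_eqvGen hti (hρr0 _ _ hzz') with heq | ⟨⟨t, νB, hT, hzt⟩, -⟩
    · exact absurd heq hnee
    · refine ⟨t.eval A (fun n => (hsurj (νB n)).choose), ?_, ?_⟩
      · rw [hom_eval, hzt]
        congr 1; funext n; exact (hsurj (νB n)).choose_spec
      · exact ⟨t, (fun n => Quot.mk _ ((hsurj (νB n)).choose)), hT,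
          (quot_eval hrA t _).symm⟩
  -- merging finitely many elements of the class of b into one good class of A
  have merge : ∀ zs : List B.carrier, (∀ z ∈ zs, ρ z b) →
      ∃ (c : A.carrier) (sel : B.carrier → A.carrier),
        GoodCl Ew (interCong Ew A) c ∧ ρ (hom.toFun c) b ∧
        ∀ z ∈ zs, interCong Ew A (sel z) c ∧ hom.toFun (sel z) = z := by
    intro zs
    induction zs with
    | nil =>
        intro _
        obtain ⟨vb, hvb, hGvb⟩ := goodlift b (hρ.1.refl b)
        exact ⟨vb, fun _ => vb, hGvb, by rw [hvb]; exact hρ.1.refl b, by simp⟩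
    | cons z zs ih =>
        intro hall
        obtain ⟨c, sel, hGc, hcb, hsel⟩ := ih (fun w hw => hall w (List.mem_cons_of_mem _ hw))
        obtain ⟨vz, hvzh, hGvz⟩ := goodlift z (hall z (List.mem_cons_self))
        have hchain0 : ρ (hom.toFun c) (hom.toFun vz) := by
          rw [hvzh]; exact hρ.1.trans hcb (hρ.1.symm (hall z (List.mem_cons_self)))
        have hschain := schain_of_rho hom hsurj hrA hqA hρ hchain0
        have hgchain : Relation.EqvGen (GStep Ew hom (interCong Ew A)) c vz :=
          Relation.EqvGen.trans _ _ _
            (Relation.EqvGen.rel _ _ (gstep_self_delta hom hrA hqA hc hGc))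
            (Relation.EqvGen.trans _ _ _
              (gchain_delta hom hrA hc hschain)
              (Relation.EqvGen.symm _ _
                (Relation.EqvGen.rel _ _ (gstep_self_delta hom hrA hqA hc hGvz))))
        have hinit : TState Ew hom (interCong Ew A) zs c :=
          ⟨c, sel, c, hGc, hsel, hrA.refl c, rfl⟩
        have hfinal := (tstate_iff ha1 ha2 hb hc hom hrA hqA hrepA hMA zs hgchain).mp hinit
        obtain ⟨c2, sel2, uh2, hGc2, hsel2, huh2, huh2h⟩ := hfinal
        refine ⟨uh2, fun w => if w = z then uh2 else sel2 w, ?_, ?_, ?_⟩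
        · obtain ⟨t, νq, hT, hq⟩ := hGc2
          exact ⟨t, νq, hT, (Quot.sound huh2).trans hq⟩
        · rw [huh2h, hvzh]; exact hall z (List.mem_cons_self)
        · intro w hw
          by_cases hwz : w = z
          · subst hwz
            refine ⟨?_, ?_⟩
            · show interCong Ew A (if w = w then uh2 else sel2 w) uh2
              rw [if_pos rfl]
              exact hrA.refl _
            · show hom.toFun (if w = w then uh2 else sel2 w) = w
              rw [if_pos rfl, huh2h, hvzh]
          · rcases List.mem_cons.mp hw with h | h
            · exact absurd h hwz
            · simp only [if_neg hwz]
              obtain ⟨hr, hh⟩ := hsel2 w h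
              exact ⟨hrA.trans hr (hrA.symm huh2), hh⟩
  -- assemble
  obtain ⟨c, sel, hGc, -, hsel⟩ := merge
    (((tvlist e.1) ++ (tvlist e.2)).map (fun n => (ν n).1))
    (by intro z hz
        obtain ⟨n, -, rfl⟩ := List.mem_map.mp hz
        exact (ν n).2)
  have hcsc : ClassIsSub A (interCong Ew A) c := classIsSub_of_good hrA hqA hGc
  have hVc := hMA _ hrepA c hcsc
  have hSat := hVc e he (fun n =>
    if hm : (ν n).1 ∈ ((tvlist e.1) ++ (tvlist e.2)).map (fun n => (ν n).1)
    then ⟨sel ((ν n).1), (hsel _ hm).1⟩ else ⟨c, hrA.refl c⟩)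
  have hval := congrArg Subtype.val hSat
  rw [class_eval, class_eval] at hval
  have hhom := congrArg hom.toFun hval
  rw [hom_eval, hom_eval] at hhom
  have hmatch : ∀ (t : Term Ω ar ℕ), (∀ x ∈ t.varSet,
        x ∈ (tvlist e.1) ++ (tvlist e.2)) →
      Term.eval B (fun n => hom.toFun ((if hm : (ν n).1 ∈ ((tvlist e.1) ++ (tvlist e.2)).map (fun n => (ν n).1)
          then (⟨sel ((ν n).1), (hsel _ hm).1⟩ : {w // interCong Ew A w c}) else ⟨c, hrA.refl c⟩) : {w // interCong Ew A w c}).1) t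
        = Term.eval B (fun n => (ν n).1) t := by
    intro t ht
    apply eval_congr_vars
    intro x hx
    have hmem : (ν x).1 ∈ ((tvlist e.1) ++ (tvlist e.2)).map (fun n => (ν n).1) :=
      List.mem_map.mpr ⟨x, ht x hx, rfl⟩
    rw [dif_pos hmem]
    exact (hsel _ hmem).2
  have h1 := hmatch e.1 (fun x hx => List.mem_append_left _ (mem_tvlist hx))
  have h2 := hmatch e.2 (fun x hx => List.mem_append_right _ (mem_tvlist hx))
  apply Subtype.ext
  rw [class_eval, class_eval]
  calc Term.eval B (fun n => (ν n).1) e.1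
      = _ := h1.symm
    _ = _ := hhom
    _ = Term.eval B (fun n => (ν n).1) e.2 := h2
end

section
/- The Mal'tsev product CS ∘ S of the variety of constant semigroups and the variety of semilattices is not closed under homomorphic images, hence not a variety: the 4-element groupoid A = {a,e,b,f} with multiplication a·a = a·e = e·a = e·e = e, a·b = b·a = b, and all other products equal to f belongs to CS ∘ S, but its quotient identifying e and f does not. -/
variable {Ω : Type} {ar : Ω → ℕ} {X Y : Type}

def bmul (s t : Term Unit (fun _ : Unit => 2) ℕ) : Term Unit (fun _ : Unit => 2) ℕ :=
  .op () ![s, t]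

/-- Constant semigroups: `x·y = z·t`. -/
def CS : Alg Unit (fun _ : Unit => 2) → Prop :=
  VarietyOf {(bmul (.var 0) (.var 1), bmul (.var 2) (.var 3))}

/-- Semilattices: idempotent commutative semigroups. -/
def SL : Alg Unit (fun _ : Unit => 2) → Prop :=
  VarietyOf {(bmul (.var 0) (.var 1), bmul (.var 1) (.var 0)),
             (bmul (bmul (.var 0) (.var 1)) (.var 2), bmul (.var 0) (bmul (.var 1) (.var 2))),
             (bmul (.var 0) (.var 0), .var 0)}

/-- The 4-element groupoid `A = {a, e, b, f}` (encoded `a = 0, e = 1, b = 2, f = 3`). -/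
def mulA : Fin 4 → Fin 4 → Fin 4 :=
  ![![1, 1, 2, 3], ![1, 1, 3, 3], ![2, 3, 3, 3], ![3, 3, 3, 3]]

def Agpd : Alg Unit (fun _ : Unit => 2) := ⟨Fin 4, fun _ f => mulA (f 0) (f 1)⟩

/-- The quotient groupoid `A/θ` on `{{a}, {b}, E}` (encoded `{a} = 0, {b} = 1, E = 2`). -/
def mulQ : Fin 3 → Fin 3 → Fin 3 :=
  ![![2, 1, 2], ![1, 2, 2], ![2, 2, 2]]

def Qgpd : Alg Unit (fun _ : Unit => 2) := ⟨Fin 3, fun _ f => mulQ (f 0) (f 1)⟩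

-- ===== auxiliary lemmas =====

theorem IsCongr.equiv {A : Alg Ω ar} {r : A.carrier → A.carrier → Prop}
    (h : IsCongr A r) : Equivalence r := ⟨h.refl, h.symm, h.trans⟩

theorem congr_exact {A : Alg Ω ar} {r : A.carrier → A.carrier → Prop}
    (h : IsCongr A r) {a b : A.carrier} (e : Quot.mk r a = Quot.mk r b) : r a b :=
  h.equiv.eqvGen_iff.mp (Quot.eqvGen_exact e)

theorem r_out {A : Alg Ω ar} {r : A.carrier → A.carrier → Prop}
    (h : IsCongr A r) (a : A.carrier) : r (Quot.mk r a).out a :=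
  congr_exact h (Quot.out_eq _)

theorem quot_interp {A : Alg Ω ar} {r : A.carrier → A.carrier → Prop}
    (h : IsCongr A r) (ω : Ω) (f : Fin (ar ω) → A.carrier) :
    (A.quot r).interp ω (fun i => Quot.mk r (f i)) = Quot.mk r (A.interp ω f) :=
  Quot.sound (h.compat ω _ _ fun i => r_out h (f i))

theorem eval_quot {A : Alg Ω ar} {r : A.carrier → A.carrier → Prop}
    (h : IsCongr A r) (w : X → A.carrier) :
    ∀ t : Term Ω ar X, t.eval (A.quot r) (fun n => Quot.mk r (w n)) = Quot.mk r (t.eval A w)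
  | .var x => rfl
  | .op ω ts => by
      show (A.quot r).interp ω (fun i => (ts i).eval (A.quot r) fun n => Quot.mk r (w n)) = _
      have he : (fun i => (ts i).eval (A.quot r) fun n => Quot.mk r (w n))
          = fun i => Quot.mk r ((ts i).eval A w) := funext fun i => eval_quot h w (ts i)
      rw [he, quot_interp h]
      rfl

theorem sat_quot {A : Alg Ω ar} {r : A.carrier → A.carrier → Prop}
    (h : IsCongr A r) {p q : Term Ω ar X} :
    Satisfies (A.quot r) p q ↔ ∀ w : X → A.carrier, r (p.eval A w) (q.eval A w) := by
  constructor
  · intro hs w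
    have hh := hs (fun n => Quot.mk r (w n))
    rw [eval_quot h, eval_quot h] at hh
    exact congr_exact h hh
  · intro hr v
    have hv : v = fun n => Quot.mk r ((v n).out) := funext fun n => (Quot.out_eq _).symm
    rw [hv, eval_quot h, eval_quot h]
    exact Quot.sound (hr _)

-- ===== the groupoid A =====

def r0 : Fin 4 → Fin 4 → Prop := fun x y => x.val / 2 = y.val / 2

instance : ∀ x y, Decidable (r0 x y) := fun _ _ => inferInstanceAs (Decidable (_ = _))

theorem r0_compat : ∀ a b c d : Fin 4, r0 a c → r0 b d → r0 (mulA a b) (mulA c d) := by decide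

theorem r0_congr : IsCongr Agpd r0 := by
  refine ⟨fun a => rfl, fun h => h.symm, fun h1 h2 => h1.trans h2, ?_⟩
  intro ω f g hfg
  exact r0_compat (f 0) (f 1) (g 0) (g 1) (hfg 0) (hfg 1)

theorem r0_comm : ∀ a b : Fin 4, r0 (mulA a b) (mulA b a) := by decide
theorem r0_assoc : ∀ a b c : Fin 4, r0 (mulA (mulA a b) c) (mulA a (mulA b c)) := by decide
theorem r0_idem : ∀ a : Fin 4, r0 (mulA a a) a := by decide

theorem SL_quot_r0 : SL (Agpd.quot r0) := by
  intro e he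
  apply (sat_quot r0_congr).mpr
  intro w
  simp only [Set.mem_insert_iff, Set.mem_singleton_iff] at he
  rcases he with he | he | he <;> subst he
  · exact r0_comm (w 0) (w 1)
  · exact r0_assoc (w 0) (w 1) (w 2)
  · exact r0_idem (w 0)

theorem idem_mem_SL :
    ((bmul (.var 0) (.var 0), (.var 0 : Term Unit (fun _ : Unit => 2) ℕ)) ∈
      ({(bmul (.var 0) (.var 1), bmul (.var 1) (.var 0)),
        (bmul (bmul (.var 0) (.var 1)) (.var 2), bmul (.var 0) (bmul (.var 1) (.var 2))),
        (bmul (.var 0) (.var 0), (.var 0 : Term Unit (fun _ : Unit => 2) ℕ))} :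
        Set (Term Unit (fun _ : Unit => 2) ℕ × Term Unit (fun _ : Unit => 2) ℕ))) :=
  Set.mem_insert_iff.mpr (Or.inr (Set.mem_insert_iff.mpr (Or.inr rfl)))

theorem r0_sub {s : Fin 4 → Fin 4 → Prop} (hs : IsCongr Agpd s)
    (hsl : SL (Agpd.quot s)) : ∀ a b : Fin 4, r0 a b → s a b := by
  have hsat := (sat_quot hs).mp (hsl (bmul (.var 0) (.var 0), .var 0) idem_mem_SL)
  have h10 : s 1 0 := hsat (fun _ => (0 : Fin 4))
  have h32 : s 3 2 := hsat (fun _ => (2 : Fin 4))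
  have h00 : s 0 0 := hs.refl (0 : Fin 4)
  have h11 : s 1 1 := hs.refl (1 : Fin 4)
  have h22 : s 2 2 := hs.refl (2 : Fin 4)
  have h33 : s 3 3 := hs.refl (3 : Fin 4)
  have h01 : s 0 1 := hs.symm h10
  have h23 : s 2 3 := hs.symm h32
  intro a b hab
  fin_cases a <;> fin_cases b <;> first
    | assumption
    | exact absurd hab (by decide)

theorem r0_replica : IsReplica SL Agpd r0 :=
  ⟨r0_congr, SL_quot_r0, fun _ hs hsl => r0_sub hs hsl⟩

theorem replica_eq {r : Fin 4 → Fin 4 → Prop} (h : IsReplica SL Agpd r) :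
    ∀ a b, r a b ↔ r0 a b := fun a b =>
  ⟨h.2.2 r0 r0_congr SL_quot_r0 a b, r0_sub h.1 h.2.1 a b⟩

theorem key_const : ∀ a x y z t : Fin 4,
    r0 x a → r0 y a → r0 z a → r0 t a → mulA x y = mulA z t := by decide

theorem malA : MalProd CS SL Agpd := by
  intro r hrep a hsub
  have hre := replica_eq hrep
  intro e he v
  simp only [Set.mem_singleton_iff] at he
  subst he
  apply Subtype.ext
  show mulA (v 0).1 (v 1).1 = mulA (v 2).1 (v 3).1
  exact key_const a _ _ _ _
    ((hre _ _).mp (v 0).2) ((hre _ _).mp (v 1).2)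
    ((hre _ _).mp (v 2).2) ((hre _ _).mp (v 3).2)

-- ===== the quotient groupoid Q =====

def r1 : Fin 3 → Fin 3 → Prop := fun _ _ => True

theorem r1_congr : IsCongr Qgpd r1 :=
  ⟨fun _ => trivial, fun _ => trivial, fun _ _ => trivial, fun _ _ _ _ => trivial⟩

theorem r1_replica : IsReplica SL Qgpd r1 := by
  refine ⟨r1_congr, ?_, ?_⟩
  · intro e he
    exact (sat_quot r1_congr).mpr fun w => trivial
  · intro s hs hsl
    have hsat := (sat_quot hs).mp (hsl (bmul (.var 0) (.var 0), .var 0) idem_mem_SL)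
    have h20 : s (2:Fin 3) (0:Fin 3) := hsat (fun _ => (0 : Fin 3))
    have h21 : s (2:Fin 3) (1:Fin 3) := hsat (fun _ => (1 : Fin 3))
    have h00 : s (0:Fin 3) (0:Fin 3) := hs.refl (0 : Fin 3)
    have h11 : s (1:Fin 3) (1:Fin 3) := hs.refl (1 : Fin 3)
    have h22 : s (2:Fin 3) (2:Fin 3) := hs.refl (2 : Fin 3)
    have h02 : s (0:Fin 3) (2:Fin 3) := hs.symm h20
    have h12 : s (1:Fin 3) (2:Fin 3) := hs.symm h21
    have h01 : s (0:Fin 3) (1:Fin 3) := hs.trans h02 h21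
    have h10 : s (1:Fin 3) (0:Fin 3) := hs.trans h12 h20
    have hall : ∀ a b : Fin 3, s a b := by
      intro a b; fin_cases a <;> fin_cases b <;> assumption
    exact fun a b _ => hall a b

theorem notMalQ : ¬ MalProd CS SL Qgpd := by
  intro h
  have hsub : ClassIsSub Qgpd r1 (0 : Fin 3) := fun ω f _ => trivial
  have hcs := h r1 r1_replica (0 : Fin 3) hsub
  have hv := hcs (bmul (.var 0) (.var 1), bmul (.var 2) (.var 3)) rfl
    (fun n => if n = 1 then ⟨(1 : Fin 3), trivial⟩ else ⟨(0 : Fin 3), trivial⟩)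
  have hval := congrArg Subtype.val hv
  have hmq : mulQ 0 1 = mulQ 0 0 := hval
  exact absurd hmq (by decide)

def theHom : Hom Agpd Qgpd where
  toFun := ((![0, 2, 1, 2] : Fin 4 → Fin 3) : Agpd.carrier → Qgpd.carrier)
  map := by
    intro ω f
    exact (show ∀ a b : Fin 4, (![0, 2, 1, 2] : Fin 4 → Fin 3) (mulA a b)
        = mulQ ((![0, 2, 1, 2] : Fin 4 → Fin 3) a) ((![0, 2, 1, 2] : Fin 4 → Fin 3) b)
      by decide) (f 0) (f 1)


/-- `A ∈ CS ∘ S`, the map identifying `e` and `f` is a surjective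
homomorphism onto `A/θ`, but `A/θ ∉ CS ∘ S`; hence `CS ∘ S` is not closed under
homomorphic images and is not a variety. -/
theorem stmt_15 :
    MalProd CS SL Agpd ∧
    (∃ h : Hom Agpd Qgpd, h.toFun = ((![0, 2, 1, 2] : Fin 4 → Fin 3) : Agpd.carrier → Qgpd.carrier) ∧ Function.Surjective h.toFun) ∧
    ¬ MalProd CS SL Qgpd ∧
    ¬ (∀ (A B : Alg Unit (fun _ : Unit => 2)) (h : Hom A B), Function.Surjective h.toFun →
        MalProd CS SL A → MalProd CS SL B) := by
  have hsurj : Function.Surjective theHom.toFun := by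
    have h : ∀ y : Fin 3, ∃ x : Fin 4, (![0, 2, 1, 2] : Fin 4 → Fin 3) x = y := by decide
    intro y
    obtain ⟨x, hx⟩ := h y
    exact ⟨x, hx⟩
  refine ⟨malA, ⟨theHom, rfl, hsurj⟩, notMalQ, ?_⟩
  intro H
  exact notMalQ (H Agpd Qgpd theHom hsurj malA)
end

section
/- Let V be a polarized variety satisfying a nontrivial polar identity u = v. The following are equivalent: (1) every nontrivial consequence of any set of polar identities true in V is polar; (2) every nontrivial consequence of the identity u = v is polar; (3) V has a zero term. -/
variable {Ω : Type} {ar : Ω → ℕ} {X Y : Type}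

/-- `u` is a constant term of `V`: `V ⊨ u(x₁,…,xₙ) = u(y₁,…,yₙ)`. -/
def ConstTerm {Ω : Type} {ar : Ω → ℕ} (V : Alg Ω ar → Prop) (u : Term Ω ar ℕ) : Prop :=
  VSat V (u.subst fun n => .var (2 * n)) (u.subst fun n => .var (2 * n + 1))

/-- A polar term of `V`: a constant unary term idempotent. -/
def IsPolar {Ω : Type} {ar : Ω → ℕ} (V : Alg Ω ar → Prop) (p : Term Ω ar ℕ) : Prop :=
  p.varSet ⊆ {0} ∧ ConstTerm V p ∧ TermIdem V p

/-- A zero term of `V`: a constant term `p` with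
`V ⊨ ω(x₁,…,x_{i-1}, p(x), x_{i+1},…,xₙ) = p(x)` for all `ω` and positions `i`. -/
def IsZeroTerm {Ω : Type} {ar : Ω → ℕ} (V : Alg Ω ar → Prop) (p : Term Ω ar ℕ) : Prop :=
  p.varSet ⊆ {0} ∧ ConstTerm V p ∧
  ∀ (ω : Ω) (i : Fin (ar ω)),
    VSat V (Term.op ω fun j => if j = i then p else .var (j.1 + 1)) p

/-- A polar identity of `V`: both sides are constant term idempotents of `V`. -/
def PolarId {Ω : Type} {ar : Ω → ℕ} (V : Alg Ω ar → Prop) (u v : Term Ω ar ℕ) : Prop :=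
  ConstTerm V u ∧ ConstTerm V v ∧ TermIdem V u ∧ TermIdem V v

/-- `u = v` is a (semantic) consequence of the set of identities `E`. -/
def Conseq {Ω : Type} {ar : Ω → ℕ} (E : Set (Term Ω ar ℕ × Term Ω ar ℕ))
    (u v : Term Ω ar ℕ) : Prop :=
  ∀ A : Alg Ω ar, Models A E → Satisfies A u v

section Aux

variable {Ω : Type} {ar : Ω → ℕ}

theorem eval_subst (A : Alg Ω ar) {X Y : Type} (σ : X → Term Ω ar Y)
    (t : Term Ω ar X) (w : Y → A.carrier) :
    (t.subst σ).eval A w = t.eval A (fun x => (σ x).eval A w) := by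
  induction t with
  | var x => rfl
  | op ω ts ih =>
    simp only [Term.subst, Term.eval]
    congr 1; funext i; exact ih i

theorem subst_subst {X Y Z : Type} (σ : X → Term Ω ar Y) (τ : Y → Term Ω ar Z)
    (t : Term Ω ar X) :
    (t.subst σ).subst τ = t.subst (fun x => (σ x).subst τ) := by
  induction t with
  | var x => rfl
  | op ω ts ih =>
    simp only [Term.subst]
    congr 1; funext i; exact ih i

theorem subst_var {X : Type} (t : Term Ω ar X) : t.subst (fun x => .var x) = t := by
  induction t with
  | var x => rfl
  | op ω ts ih =>
    simp only [Term.subst]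
    congr 1; funext i; exact ih i

/-- Semantic version of constancy. -/
def ConstEval (V : Alg Ω ar → Prop) (s : Term Ω ar ℕ) : Prop :=
  ∀ A, V A → ∀ v1 v2 : ℕ → A.carrier, s.eval A v1 = s.eval A v2

theorem constEval_of_constTerm {V : Alg Ω ar → Prop} {s : Term Ω ar ℕ}
    (h : ConstTerm V s) : ConstEval V s := by
  intro A hA v1 v2
  have h2 := h A hA (fun n => if n % 2 = 0 then v1 (n / 2) else v2 (n / 2))
  rw [eval_subst, eval_subst] at h2
  simp only [Term.eval] at h2
  have e1 : ∀ x : ℕ, (if 2 * x % 2 = 0 then v1 (2 * x / 2) else v2 (2 * x / 2)) = v1 x := by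
    intro x
    have h0 : 2 * x % 2 = 0 := by omega
    have h1 : 2 * x / 2 = x := by omega
    rw [if_pos h0, h1]
  have e2 : ∀ x : ℕ,
      (if (2 * x + 1) % 2 = 0 then v1 ((2 * x + 1) / 2) else v2 ((2 * x + 1) / 2)) = v2 x := by
    intro x
    have h0 : ¬ (2 * x + 1) % 2 = 0 := by omega
    have h1 : (2 * x + 1) / 2 = x := by omega
    rw [if_neg h0, h1]
  rw [funext e1, funext e2] at h2
  exact h2

theorem constTerm_of_constEval {V : Alg Ω ar → Prop} {s : Term Ω ar ℕ}
    (h : ConstEval V s) : ConstTerm V s := by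
  intro A hA w
  rw [eval_subst, eval_subst]
  exact h A hA _ _

theorem varSet_subst_zero (t : Term Ω ar ℕ) :
    (t.subst fun _ => (.var 0 : Term Ω ar ℕ)).varSet ⊆ {0} := by
  induction t with
  | var x => intro a ha; exact ha
  | op ω ts ih =>
    intro a ha
    simp only [Term.subst, Term.varSet, Set.mem_iUnion] at ha
    obtain ⟨i, hi⟩ := ha
    exact ih i hi

/-- Absorbing property of a zero term. -/
theorem zero_absorb {V : Alg Ω ar → Prop} {z : Term Ω ar ℕ} (hz : IsZeroTerm V z)
    {A : Alg Ω ar} (hA : V A) (ω : Ω) (i : Fin (ar ω)) (f : Fin (ar ω) → A.carrier)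
    (w₀ : ℕ → A.carrier) (hf : f i = z.eval A w₀) :
    A.interp ω f = z.eval A w₀ := by
  have hc := constEval_of_constTerm hz.2.1
  set w' : ℕ → A.carrier := fun m => if h : m - 1 < ar ω then f ⟨m - 1, h⟩ else f i with hw'
  have hlaw := hz.2.2 ω i A hA w'
  simp only [Term.eval] at hlaw
  have hz' : z.eval A w' = z.eval A w₀ := hc A hA _ _
  have harg : (fun j => Term.eval A w' (if j = i then z else Term.var (j.1 + 1))) = f := by
    funext j
    by_cases hj : j = i
    · subst hj
      rw [if_pos rfl, hz', ← hf]
    · rw [if_neg hj]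
      show w' (j.1 + 1) = f j
      simp only [hw']
      rw [dif_pos (by omega : j.1 + 1 - 1 < ar ω)]
      congr 1
  rw [harg] at hlaw
  rw [hlaw, hz']

theorem eval_all_zero {V : Alg Ω ar → Prop} (hτ : ∀ ω, 0 < ar ω)
    {z : Term Ω ar ℕ} (hz : IsZeroTerm V z)
    {A : Alg Ω ar} (hA : V A) (t : Term Ω ar ℕ) (w₀ : ℕ → A.carrier) :
    t.eval A (fun _ => z.eval A w₀) = z.eval A w₀ := by
  induction t with
  | var x => rfl
  | op ω ts ih =>
    simp only [Term.eval]
    exact zero_absorb hz hA ω ⟨0, hτ ω⟩ _ w₀ (ih ⟨0, hτ ω⟩)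

/-- `s` evaluates to the zero constant everywhere in `V`. -/
def IsZ (V : Alg Ω ar → Prop) (z s : Term Ω ar ℕ) : Prop :=
  ∀ A, V A → ∀ (w w₀ : ℕ → A.carrier), s.eval A w = z.eval A w₀

theorem isZ_of_constEval {V : Alg Ω ar → Prop} (hτ : ∀ ω, 0 < ar ω)
    {z : Term Ω ar ℕ} (hz : IsZeroTerm V z) {s : Term Ω ar ℕ}
    (h : ConstEval V s) : IsZ V z s := by
  intro A hA w w₀
  calc s.eval A w = s.eval A (fun _ => z.eval A w₀) := h A hA _ _
    _ = z.eval A w₀ := eval_all_zero hτ hz hA s w₀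

theorem isZ_subst {V : Alg Ω ar → Prop} {z s : Term Ω ar ℕ}
    (h : IsZ V z s) (σ : ℕ → Term Ω ar ℕ) : IsZ V z (s.subst σ) := by
  intro A hA w w₀
  rw [eval_subst]; exact h A hA _ _

theorem polar_of_isZ {V : Alg Ω ar → Prop} (hτ : ∀ ω, 0 < ar ω) {z s : Term Ω ar ℕ}
    (hz : IsZeroTerm V z) (h : IsZ V z s) : ConstTerm V s ∧ TermIdem V s := by
  constructor
  · exact constTerm_of_constEval (fun A hA v1 v2 => by rw [h A hA v1 v1, h A hA v2 v1])
  · intro ω A hA w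
    simp only [Term.eval]
    have hs := h A hA w w
    rw [hs]
    exact zero_absorb hz hA ω ⟨0, hτ ω⟩ _ w rfl

/-- Equational derivability from `E`. -/
inductive Der (E : Set (Term Ω ar ℕ × Term Ω ar ℕ)) :
    Term Ω ar ℕ → Term Ω ar ℕ → Prop
  | base : ∀ {s t}, (s, t) ∈ E → ∀ σ, Der E (s.subst σ) (t.subst σ)
  | refl : ∀ t, Der E t t
  | symm : ∀ {s t}, Der E s t → Der E t s
  | trans : ∀ {s t r}, Der E s t → Der E t r → Der E s r
  | compat : ∀ (ω : Ω) (f g : Fin (ar ω) → Term Ω ar ℕ),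
      (∀ i, Der E (f i) (g i)) → Der E (Term.op ω f) (Term.op ω g)

theorem der_equivalence (E : Set (Term Ω ar ℕ × Term Ω ar ℕ)) :
    Equivalence (Der E) :=
  ⟨Der.refl, Der.symm, Der.trans⟩

theorem der_of_mk_eq {E : Set (Term Ω ar ℕ × Term Ω ar ℕ)} {a b : Term Ω ar ℕ}
    (h : Quot.mk (Der E) a = Quot.mk (Der E) b) : Der E a b :=
  ((der_equivalence E).eqvGen_iff).mp (Quot.eq.mp h)

def termAlg (Ω : Type) (ar : Ω → ℕ) : Alg Ω ar := ⟨Term Ω ar ℕ, Term.op⟩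

theorem eval_quot_s17 (E : Set (Term Ω ar ℕ × Term Ω ar ℕ)) (t : Term Ω ar ℕ)
    (vq : ℕ → ((termAlg Ω ar).quot (Der E)).carrier) :
    t.eval ((termAlg Ω ar).quot (Der E)) vq =
      Quot.mk (Der E) (t.subst (fun n => (vq n).out)) := by
  induction t with
  | var x => exact (Quot.out_eq (vq x)).symm
  | op ω ts ih =>
    have hstep : Term.eval ((termAlg Ω ar).quot (Der E)) vq (.op ω ts)
        = Quot.mk (Der E)
            (.op ω fun i => (Term.eval ((termAlg Ω ar).quot (Der E)) vq (ts i)).out) := rfl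
    rw [hstep]
    show _ = Quot.mk (Der E) (Term.op ω fun i => (ts i).subst fun n => (vq n).out)
    apply Quot.sound
    apply Der.compat
    intro i
    apply der_of_mk_eq
    exact (Quot.out_eq _).trans (ih i)

theorem conseq_der {E : Set (Term Ω ar ℕ × Term Ω ar ℕ)} {s t : Term Ω ar ℕ}
    (h : Conseq E s t) : Der E s t := by
  have hM : Models ((termAlg Ω ar).quot (Der E)) E := by
    rintro ⟨a, b⟩ he w
    rw [eval_quot_s17, eval_quot_s17]
    exact Quot.sound (Der.base he _)
  have key := h _ hM (fun n => Quot.mk (Der E) (.var n))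
  replace key := (eval_quot_s17 E s _).symm.trans (key.trans (eval_quot_s17 E t _))
  have hσ : ∀ n, Der E ((Quot.mk (Der E) (Term.var n : Term Ω ar ℕ)).out) (.var n) :=
    fun n => der_of_mk_eq (by rw [Quot.out_eq])
  have hsub : ∀ r : Term Ω ar ℕ, Der E r
      (r.subst fun n => (Quot.mk (Der E) (Term.var n : Term Ω ar ℕ)).out) := by
    intro r
    induction r with
    | var x => exact (hσ x).symm
    | op ω ts ih => exact Der.compat ω _ _ ih
  exact ((hsub s).trans (der_of_mk_eq key)).trans (hsub t).symm

theorem der_invariant {V : Alg Ω ar → Prop} (hτ : ∀ ω, 0 < ar ω)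
    {z : Term Ω ar ℕ} (hz : IsZeroTerm V z)
    {E : Set (Term Ω ar ℕ × Term Ω ar ℕ)}
    (hE : ∀ e ∈ E, VSat V e.1 e.2 ∧ PolarId V e.1 e.2)
    {s t : Term Ω ar ℕ} (h : Der E s t) :
    s = t ∨ (IsZ V z s ∧ IsZ V z t) := by
  induction h with
  | base he σ =>
    right
    obtain ⟨-, hc1, hc2, -, -⟩ := hE _ he
    exact ⟨isZ_subst (isZ_of_constEval hτ hz (constEval_of_constTerm hc1)) σ,
      isZ_subst (isZ_of_constEval hτ hz (constEval_of_constTerm hc2)) σ⟩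
  | refl t => exact Or.inl rfl
  | symm h ih =>
    rcases ih with h' | h'
    · exact Or.inl h'.symm
    · exact Or.inr ⟨h'.2, h'.1⟩
  | trans h1 h2 ih1 ih2 =>
    rcases ih1 with rfl | h1'
    · exact ih2
    rcases ih2 with rfl | h2'
    · exact Or.inr h1'
    · exact Or.inr ⟨h1'.1, h2'.2⟩
  | compat ω f g hfg ih =>
    by_cases hall : ∀ i, f i = g i
    · exact Or.inl (congrArg _ (funext hall))
    · push_neg at hall
      obtain ⟨i, hi⟩ := hall
      have hZ : IsZ V z (f i) ∧ IsZ V z (g i) := (ih i).resolve_left hi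
      right
      constructor <;> intro A hA w w₀ <;> simp only [Term.eval]
      · exact zero_absorb hz hA ω i _ w₀ (hZ.1 A hA w w₀)
      · exact zero_absorb hz hA ω i _ w₀ (hZ.2 A hA w w₀)

/-- (3) → (1). -/
theorem h1_of_zero {V : Alg Ω ar → Prop} (hτ : ∀ ω, 0 < ar ω)
    {z : Term Ω ar ℕ} (hz : IsZeroTerm V z)
    (E : Set (Term Ω ar ℕ × Term Ω ar ℕ))
    (hE : ∀ e ∈ E, VSat V e.1 e.2 ∧ PolarId V e.1 e.2)
    (u' v' : Term Ω ar ℕ) (hc : Conseq E u' v') (hne : u' ≠ v') :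
    PolarId V u' v' := by
  have hd := conseq_der hc
  obtain ⟨h1, h2⟩ := (der_invariant hτ hz hE hd).resolve_left hne
  obtain ⟨c1, i1⟩ := polar_of_isZ hτ hz h1
  obtain ⟨c2, i2⟩ := polar_of_isZ hτ hz h2
  exact ⟨c1, c2, i1, i2⟩

/-- (2) → (3). -/
theorem zero_of_h2 {V : Alg Ω ar → Prop}
    {u v : Term Ω ar ℕ} (huv : u ≠ v) (hsat : VSat V u v) (hpid : PolarId V u v)
    (h2 : ∀ u' v' : Term Ω ar ℕ, Conseq {(u, v)} u' v' → u' ≠ v' → PolarId V u' v') :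
    ∃ z : Term Ω ar ℕ, IsZeroTerm V z := by
  have hcu : ConstEval V u := constEval_of_constTerm hpid.1
  refine ⟨u.subst (fun _ => .var 0), varSet_subst_zero u, ?_, ?_⟩
  · apply constTerm_of_constEval
    intro A hA v1 v2
    rw [eval_subst, eval_subst]
    exact hcu A hA _ _
  · intro ω i A hA w
    set ρ : ℕ → Term Ω ar ℕ := fun n => .var (2 * n) with hρ
    set f' : Fin (ar ω) → Term Ω ar ℕ :=
      fun j => if j = i then u.subst ρ else .var (2 * j.1 + 1) with hf'
    set g' : Fin (ar ω) → Term Ω ar ℕ :=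
      fun j => if j = i then v.subst ρ else .var (2 * j.1 + 1) with hg'
    have hρinj : ∀ s t : Term Ω ar ℕ, s.subst ρ = t.subst ρ → s = t := by
      intro s t hst
      have h3 := congrArg (Term.subst (fun m => (.var (m / 2) : Term Ω ar ℕ))) hst
      rw [subst_subst, subst_subst] at h3
      have hcomp : (fun x => (ρ x).subst (fun m => (.var (m / 2) : Term Ω ar ℕ)))
          = fun x => (.var x : Term Ω ar ℕ) := by
        funext x
        simp only [hρ, Term.subst]
        congr 1
        omega
      rw [hcomp, subst_var, subst_var] at h3
      exact h3
    have hne : Term.op ω f' ≠ Term.op ω g' := by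
      intro h
      have h4 : f' = g' := by
        simpa only [Term.op.injEq, heq_eq_eq, true_and] using h
      have h5 := congrFun h4 i
      rw [hf', hg'] at h5
      simp only [if_pos rfl] at h5
      exact huv (hρinj _ _ h5)
    have hconseq : Conseq {(u, v)} (.op ω f') (.op ω g') := by
      intro B hB wB
      have huvB : Satisfies B u v := hB (u, v) rfl
      simp only [Term.eval]
      congr 1
      funext j
      by_cases hj : j = i
      · rw [hf', hg']
        simp only [if_pos hj]
        rw [eval_subst, eval_subst]
        exact huvB _
      · rw [hf', hg']
        simp only [if_neg hj]
    have hpol := h2 _ _ hconseq hne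
    have hcu' : ConstEval V (Term.op ω f') := constEval_of_constTerm hpol.1
    set ζ : A.carrier := u.eval A (fun _ => w 0) with hζ
    have huζ : ∀ v0 : ℕ → A.carrier, u.eval A v0 = ζ := fun v0 => hcu A hA _ _
    set w1 : ℕ → A.carrier := fun m => if m % 2 = 1 then w ((m - 1) / 2 + 1) else w 0
      with hw1
    have e1 : (Term.op ω f').eval A w1
        = A.interp ω (fun j => if j = i then ζ else w (j.1 + 1)) := by
      simp only [Term.eval]
      congr 1
      funext j
      by_cases hj : j = i
      · rw [hf']
        simp only [if_pos hj]
        rw [eval_subst]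
        exact huζ _
      · rw [hf']
        simp only [if_neg hj]
        show w1 (2 * j.1 + 1) = w (j.1 + 1)
        simp only [hw1]
        have h1 : (2 * j.1 + 1) % 2 = 1 := by omega
        rw [if_pos h1]
        congr 1
        omega
    have e2 : (Term.op ω f').eval A (fun _ => ζ) = ζ := by
      simp only [Term.eval]
      have harg : (fun j => Term.eval A (fun _ => ζ) (f' j)) = fun _ => ζ := by
        funext j
        by_cases hj : j = i
        · rw [hf']
          simp only [if_pos hj]
          rw [eval_subst]
          exact huζ _
        · rw [hf']
          simp only [if_neg hj]
          rfl
      rw [harg]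
      have hidem := hpid.2.2.1 ω A hA (fun _ => w 0)
      simp only [Term.eval] at hidem
      calc A.interp ω (fun _ => ζ)
          = A.interp ω (fun _ => u.eval A (fun _ => w 0)) := rfl
        _ = u.eval A (fun _ => w 0) := hidem
        _ = ζ := rfl
    have key : A.interp ω (fun j => if j = i then ζ else w (j.1 + 1)) = ζ := by
      rw [← e1, hcu' A hA w1 (fun _ => ζ), e2]
    simp only [Term.eval]
    have lhs : (fun j => Term.eval A w
        (if j = i then u.subst (fun _ => (.var 0 : Term Ω ar ℕ)) else .var (j.1 + 1)))
        = (fun j => if j = i then ζ else w (j.1 + 1)) := by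
      funext j
      by_cases hj : j = i
      · simp only [if_pos hj]
        rw [eval_subst]
        exact huζ _
      · simp only [if_neg hj]
        rfl
    rw [lhs, key, eval_subst]
    exact (huζ _).symm

end Aux

/-- for a polarized variety `V` satisfying a nontrivial polar identity
`u = v`, the following are equivalent: (1) every nontrivial consequence of any set of
polar identities true in `V` is polar; (2) every nontrivial consequence of `u = v`
is polar; (3) `V` has a zero term. -/
theorem stmt_17 {Ω : Type} {ar : Ω → ℕ} (hτ : ∀ ω, 0 < ar ω)
    (V : Alg Ω ar → Prop) (p₀ : Term Ω ar ℕ) (hpol : IsPolar V p₀)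
    (u v : Term Ω ar ℕ) (huv : u ≠ v) (hsat : VSat V u v) (hpid : PolarId V u v) :
    ((∀ E : Set (Term Ω ar ℕ × Term Ω ar ℕ),
        (∀ e ∈ E, VSat V e.1 e.2 ∧ PolarId V e.1 e.2) →
        ∀ u' v' : Term Ω ar ℕ, Conseq E u' v' → u' ≠ v' → PolarId V u' v') ↔
      (∀ u' v' : Term Ω ar ℕ, Conseq {(u, v)} u' v' → u' ≠ v' → PolarId V u' v')) ∧
    ((∀ u' v' : Term Ω ar ℕ, Conseq {(u, v)} u' v' → u' ≠ v' → PolarId V u' v') ↔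
      ∃ z : Term Ω ar ℕ, IsZeroTerm V z) := by
  constructor
  · constructor
    · intro h1
      exact h1 {(u, v)} (by rintro e rfl; exact ⟨hsat, hpid⟩)
    · intro h2
      obtain ⟨z, hz⟩ := zero_of_h2 huv hsat hpid h2
      exact fun E hE => h1_of_zero hτ hz E hE
  · constructor
    · exact zero_of_h2 huv hsat hpid
    · intro ⟨z, hz⟩ u' v' hc hne
      exact h1_of_zero hτ hz {(u, v)} (by rintro e rfl; exact ⟨hsat, hpid⟩) u' v' hc hne
end
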